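/- Let S be a left-handed skew Boolean algebra and let X ⊆ S be a generating set. For a finite nonempty subset Y ⊆ X, let ⟨Y⟩ denote the smallest subset of S containing Y and 0 and closed under ∧, ∨, \; it is itself a left-handed skew Boolean algebra under the restricted operations. Then S is freely generated by X if and only if for every finite nonempty subset Y ⊆ X, the subalgebra ⟨Y⟩ is freely generated by Y. -/
import Mathlib


universe u

/-- A skew Boolean algebra. -/
class SBA (S : Type u) where
  wedge : S → S → S
  vee : S → S → S
  diff : S → S → S
  zero : S
  wedge_assoc : ∀ x y z : S, wedge (wedge x y) z = wedge x (wedge y z)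
  vee_assoc : ∀ x y z : S, vee (vee x y) z = vee x (vee y z)
  absorb1 : ∀ x y : S, wedge x (vee x y) = x
  absorb2 : ∀ x y : S, wedge (vee y x) x = x
  absorb3 : ∀ x y : S, vee x (wedge x y) = x
  absorb4 : ∀ x y : S, vee (wedge y x) x = x
  sdistrib1 : ∀ x y z : S, wedge x (vee y z) = vee (wedge x y) (wedge x z)
  sdistrib2 : ∀ x y z : S, wedge (vee x y) z = vee (wedge x z) (wedge y z)
  zero_wedge : ∀ x : S, wedge zero x = zero
  wedge_zero : ∀ x : S, wedge x zero = zero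
  zero_vee : ∀ x : S, vee zero x = x
  vee_zero : ∀ x : S, vee x zero = x
  diff_ax1 : ∀ x y : S, vee (wedge (wedge x y) x) (diff x y) = x
  diff_ax2 : ∀ x y : S, wedge (wedge (wedge x y) x) (diff x y) = zero
  diff_ax3 : ∀ x y : S, wedge (diff x y) (wedge (wedge x y) x) = zero

namespace SBA

scoped infixl:70 " ⋏ " => SBA.wedge
scoped infixl:65 " ⋎ " => SBA.vee
scoped infixl:70 " ∖ " => SBA.diff

variable {S : Type u} [SBA S]

/-- Green's relation `D`: `x D y` iff `x⋏y⋏x = x` and `y⋏x⋏y = y`. -/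
def Drel (x y : S) : Prop := x ⋏ y ⋏ x = x ∧ y ⋏ x ⋏ y = y

/-- The natural partial order: `x ≤ y` iff `x⋏y = x = y⋏x`. -/
def nle (x y : S) : Prop := x ⋏ y = x ∧ y ⋏ x = x

/-- An atom: a nonzero element with nothing strictly between it and `0`. -/
def IsAtom (a : S) : Prop := a ≠ zero ∧ ∀ x : S, nle x a → x = zero ∨ x = a

/-- `X` generates `S`: the only subset of `S` containing `X` and `0` and closed
under the three operations is `S` itself. -/
def Generates (X : Set S) : Prop :=
  ∀ T : Set S, X ⊆ T → zero ∈ T →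
    (∀ a b : S, a ∈ T → b ∈ T → a ⋏ b ∈ T ∧ a ⋎ b ∈ T ∧ a ∖ b ∈ T) →
    T = Set.univ

/-- A homomorphism of skew Boolean algebras. -/
def IsHom {T : Type u} [SBA T] (f : S → T) : Prop :=
  (∀ a b : S, f (a ⋏ b) = f a ⋏ f b) ∧ (∀ a b : S, f (a ⋎ b) = f a ⋎ f b) ∧
    (∀ a b : S, f (a ∖ b) = f a ∖ f b) ∧ f zero = zero

end SBA

open SBA

/-- A left-handed skew Boolean algebra. -/
class LeftHanded (S : Type u) [SBA S] : Prop where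
  lh_wedge : ∀ x y : S, x ⋏ y ⋏ x = x ⋏ y
  lh_vee : ∀ x y : S, x ⋎ y ⋎ x = y ⋎ x

/-- `S` is freely generated by `X` over the variety of all skew Boolean algebras. -/
def FreelyGenerates (S : Type u) [SBA S] (X : Set S) : Prop :=
  Generates X ∧
    ∀ (T : Type u) [SBA T], ∀ g : X → T,
      ∃ f : S → T, IsHom f ∧ ∀ x : X, f x = g x

/-- `S` is freely generated by `X` over the variety of left-handed skew Boolean algebras. -/
def LFreelyGenerates (S : Type u) [SBA S] [LeftHanded S] (X : Set S) : Prop :=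
  Generates X ∧
    ∀ (T : Type u) [SBA T] [LeftHanded T], ∀ g : X → T,
      ∃ f : S → T, IsHom f ∧ ∀ x : X, f x = g x

/-- The subalgebra of `S` generated by `Y`: the smallest subset of `S`
containing `Y` and `0` and closed under the three operations. -/
def sclosure {S : Type u} [SBA S] (Y : Set S) : Set S :=
  ⋂₀ {T : Set S | Y ⊆ T ∧ SBA.zero ∈ T ∧
      ∀ a b : S, a ∈ T → b ∈ T → a ⋏ b ∈ T ∧ a ⋎ b ∈ T ∧ a ∖ b ∈ T}

lemma sclosure.zero_mem {S : Type u} [SBA S] (Y : Set S) :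
    SBA.zero ∈ sclosure Y := fun _ hT => hT.2.1

lemma sclosure.closed {S : Type u} [SBA S] {Y : Set S} {a b : S}
    (ha : a ∈ sclosure Y) (hb : b ∈ sclosure Y) :
    a ⋏ b ∈ sclosure Y ∧ a ⋎ b ∈ sclosure Y ∧ a ∖ b ∈ sclosure Y :=
  ⟨fun T hT => (hT.2.2 a b (ha T hT) (hb T hT)).1,
   fun T hT => (hT.2.2 a b (ha T hT) (hb T hT)).2.1,
   fun T hT => (hT.2.2 a b (ha T hT) (hb T hT)).2.2⟩

/-- The generated subalgebra is itself a skew Boolean algebra under the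
restricted operations. -/
instance sclosure.instSBA {S : Type u} [SBA S] (Y : Set S) : SBA (sclosure Y) where
  wedge a b := ⟨a.1 ⋏ b.1, (sclosure.closed a.2 b.2).1⟩
  vee a b := ⟨a.1 ⋎ b.1, (sclosure.closed a.2 b.2).2.1⟩
  diff a b := ⟨a.1 ∖ b.1, (sclosure.closed a.2 b.2).2.2⟩
  zero := ⟨SBA.zero, sclosure.zero_mem Y⟩
  wedge_assoc x y z := Subtype.ext (SBA.wedge_assoc x.1 y.1 z.1)
  vee_assoc x y z := Subtype.ext (SBA.vee_assoc x.1 y.1 z.1)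
  absorb1 x y := Subtype.ext (SBA.absorb1 x.1 y.1)
  absorb2 x y := Subtype.ext (SBA.absorb2 x.1 y.1)
  absorb3 x y := Subtype.ext (SBA.absorb3 x.1 y.1)
  absorb4 x y := Subtype.ext (SBA.absorb4 x.1 y.1)
  sdistrib1 x y z := Subtype.ext (SBA.sdistrib1 x.1 y.1 z.1)
  sdistrib2 x y z := Subtype.ext (SBA.sdistrib2 x.1 y.1 z.1)
  zero_wedge x := Subtype.ext (SBA.zero_wedge x.1)
  wedge_zero x := Subtype.ext (SBA.wedge_zero x.1)
  zero_vee x := Subtype.ext (SBA.zero_vee x.1)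
  vee_zero x := Subtype.ext (SBA.vee_zero x.1)
  diff_ax1 x y := Subtype.ext (SBA.diff_ax1 x.1 y.1)
  diff_ax2 x y := Subtype.ext (SBA.diff_ax2 x.1 y.1)
  diff_ax3 x y := Subtype.ext (SBA.diff_ax3 x.1 y.1)

instance sclosure.instLeftHanded {S : Type u} [SBA S] [LeftHanded S]
    (Y : Set S) : LeftHanded (sclosure Y) where
  lh_wedge x y := Subtype.ext (LeftHanded.lh_wedge x.1 y.1)
  lh_vee x y := Subtype.ext (LeftHanded.lh_vee x.1 y.1)

section Aux

variable {S : Type u} [SBA S]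

lemma sclosure_min {Y T : Set S} (hY : Y ⊆ T) (h0 : SBA.zero ∈ T)
    (hcl : ∀ a b : S, a ∈ T → b ∈ T → a ⋏ b ∈ T ∧ a ⋎ b ∈ T ∧ a ∖ b ∈ T) :
    sclosure Y ⊆ T := fun _ hs => hs T ⟨hY, h0, hcl⟩

lemma subset_sclosure (Y : Set S) : Y ⊆ sclosure Y := fun _ hy _ hT => hT.1 hy

lemma sclosure_mono {Y Y' : Set S} (h : Y ⊆ Y') : sclosure Y ⊆ sclosure Y' :=
  sclosure_min (h.trans (subset_sclosure Y')) (sclosure.zero_mem Y')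
    (fun _ _ ha hb => sclosure.closed ha hb)

lemma zero_diff_zero : (SBA.zero : S) ∖ SBA.zero = SBA.zero := by
  have h := SBA.diff_ax1 (SBA.zero : S) SBA.zero
  simpa [SBA.zero_wedge, SBA.wedge_zero, SBA.zero_vee] using h

/-- `{a ∈ ⟨Y⟩ | a ∈ Y}` generates `⟨Y⟩`. -/
lemma gen_hat (Y : Set S) :
    Generates {a : ↥(sclosure Y) | (a : S) ∈ Y} := by
  intro T hYT h0 hcl
  apply Set.eq_univ_iff_forall.mpr
  intro a
  have key : sclosure Y ⊆ {s : S | ∃ h : s ∈ sclosure Y, (⟨s, h⟩ : ↥(sclosure Y)) ∈ T} := by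
    apply sclosure_min
    · intro y hy
      exact ⟨subset_sclosure Y hy, hYT hy⟩
    · exact ⟨sclosure.zero_mem Y, h0⟩
    · rintro x y ⟨hx, hxT⟩ ⟨hy, hyT⟩
      obtain ⟨h1, h2, h3⟩ := hcl ⟨x, hx⟩ ⟨y, hy⟩ hxT hyT
      exact ⟨⟨_, h1⟩, ⟨_, h2⟩, ⟨_, h3⟩⟩
  obtain ⟨h', hT⟩ := key a.2
  exact hT

end Aux

theorem stmt18 (S : Type u) [SBA S] [LeftHanded S] (X : Set S)
    (hgen : Generates X) :
    LFreelyGenerates S X ↔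
      ∀ Y : Set S, Y ⊆ X → Y.Finite → Y.Nonempty →
        LFreelyGenerates (↥(sclosure Y)) {a : ↥(sclosure Y) | (a : S) ∈ Y} := by
  classical
  constructor
  · -- Forward direction
    intro hfree Y hYX _ _
    refine ⟨gen_hat Y, ?_⟩
    intro T _ _ g
    obtain ⟨f, hf, hfx⟩ := hfree.2 T
      (fun x => if h : (x : S) ∈ Y then g ⟨⟨x, subset_sclosure Y h⟩, h⟩ else SBA.zero)
    refine ⟨fun a => f a.1, ⟨fun a b => hf.1 a.1 b.1, fun a b => hf.2.1 a.1 b.1,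
      fun a b => hf.2.2.1 a.1 b.1, hf.2.2.2⟩, ?_⟩
    intro a
    have h1 : f ((a : ↥(sclosure Y)) : S) =
        if h : ((a : ↥(sclosure Y)) : S) ∈ Y then
          g ⟨⟨((a : ↥(sclosure Y)) : S), subset_sclosure Y h⟩, h⟩ else SBA.zero :=
      hfx ⟨((a : ↥(sclosure Y)) : S), hYX a.2⟩
    show f ((a : ↥(sclosure Y)) : S) = g a
    rw [h1, dif_pos (show ((a : ↥(sclosure Y)) : S) ∈ Y from a.2)]
  · -- Backward direction
    intro hP
    refine ⟨hgen, ?_⟩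
    intro T _ _ g
    by_cases hX : X.Nonempty
    · obtain ⟨x₀, hx₀⟩ := hX
      -- every element lies in the subalgebra generated by a finite nonempty subset of X
      have stepA : ∀ s : S, ∃ Y : Set S, (Y ⊆ X ∧ Y.Finite ∧ Y.Nonempty) ∧ s ∈ sclosure Y := by
        have hU := hgen {s : S | ∃ Y : Set S, (Y ⊆ X ∧ Y.Finite ∧ Y.Nonempty) ∧ s ∈ sclosure Y}
          ?_ ?_ ?_
        · intro s
          exact Set.eq_univ_iff_forall.mp hU s
        · intro x hx
          exact ⟨{x}, ⟨by simpa using hx, Set.finite_singleton x, Set.singleton_nonempty x⟩,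
            subset_sclosure _ rfl⟩
        · exact ⟨{x₀}, ⟨by simpa using hx₀, Set.finite_singleton x₀,
            Set.singleton_nonempty x₀⟩, sclosure.zero_mem _⟩
        · rintro a b ⟨Y₁, hY₁, ha⟩ ⟨Y₂, hY₂, hb⟩
          have ha' : a ∈ sclosure (Y₁ ∪ Y₂) := sclosure_mono Set.subset_union_left ha
          have hb' : b ∈ sclosure (Y₁ ∪ Y₂) := sclosure_mono Set.subset_union_right hb
          have helig : (Y₁ ∪ Y₂ ⊆ X ∧ (Y₁ ∪ Y₂).Finite ∧ (Y₁ ∪ Y₂).Nonempty) :=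
            ⟨Set.union_subset hY₁.1 hY₂.1, hY₁.2.1.union hY₂.2.1, hY₁.2.2.inl⟩
          obtain ⟨h1, h2, h3⟩ := sclosure.closed ha' hb'
          exact ⟨⟨_, helig, h1⟩, ⟨_, helig, h2⟩, ⟨_, helig, h3⟩⟩
      -- choose a homomorphism on each finitely generated subalgebra
      have hF : ∀ Y : Set S, ∀ h : (Y ⊆ X ∧ Y.Finite ∧ Y.Nonempty),
          ∃ f : ↥(sclosure Y) → T, IsHom f ∧
            ∀ a : ↥(sclosure Y), ∀ ha : (a : S) ∈ Y, f a = g ⟨(a : S), h.1 ha⟩ := by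
        rintro Y ⟨h1, h2, h3⟩
        obtain ⟨f, hf, hfa⟩ := (hP Y h1 h2 h3).2 T (fun a => g ⟨(a.1 : S), h1 a.2⟩)
        exact ⟨f, hf, fun a ha => hfa ⟨a, ha⟩⟩
      choose F hFhom hFagree using hF
      -- uniqueness of homomorphisms on finitely generated subalgebras
      have huniq : ∀ Y : Set S, ∀ h : (Y ⊆ X ∧ Y.Finite ∧ Y.Nonempty),
          ∀ f' : ↥(sclosure Y) → T, IsHom f' →
          (∀ a : ↥(sclosure Y), ∀ ha : (a : S) ∈ Y, f' a = g ⟨(a : S), h.1 ha⟩) →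
          ∀ a, f' a = F Y h a := by
        intro Y h f' hf' hag a
        have hgY := (hP Y h.1 h.2.1 h.2.2).1 {b : ↥(sclosure Y) | f' b = F Y h b}
          ?_ ?_ ?_
        · exact Set.eq_univ_iff_forall.mp hgY a
        · intro b hb
          exact (hag b hb).trans (hFagree Y h b hb).symm
        · exact hf'.2.2.2.trans (hFhom Y h).2.2.2.symm
        · intro b c hb hc
          refine ⟨?_, ?_, ?_⟩
          · show f' (b ⋏ c) = F Y h (b ⋏ c)
            rw [hf'.1, (hFhom Y h).1, hb, hc]
          · show f' (b ⋎ c) = F Y h (b ⋎ c)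
            rw [hf'.2.1, (hFhom Y h).2.1, hb, hc]
          · show f' (b ∖ c) = F Y h (b ∖ c)
            rw [hf'.2.2.1, (hFhom Y h).2.2.1, hb, hc]
      -- compatibility of the chosen homomorphisms
      have hcompat : ∀ Y Y' : Set S, ∀ h : (Y ⊆ X ∧ Y.Finite ∧ Y.Nonempty),
          ∀ h' : (Y' ⊆ X ∧ Y'.Finite ∧ Y'.Nonempty), ∀ hsub : Y ⊆ Y',
          ∀ s : S, ∀ hs : s ∈ sclosure Y,
          F Y h ⟨s, hs⟩ = F Y' h' ⟨s, sclosure_mono hsub hs⟩ := by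
        intro Y Y' h h' hsub s hs
        have hι : ∀ a : ↥(sclosure Y), (a : S) ∈ sclosure Y' :=
          fun a => sclosure_mono hsub a.2
        have := huniq Y h (fun a => F Y' h' ⟨(a : S), hι a⟩) ?_ ?_ ⟨s, hs⟩
        · exact this.symm
        · exact ⟨fun a b => (hFhom Y' h').1 ⟨a, hι a⟩ ⟨b, hι b⟩,
            fun a b => (hFhom Y' h').2.1 ⟨a, hι a⟩ ⟨b, hι b⟩,
            fun a b => (hFhom Y' h').2.2.1 ⟨a, hι a⟩ ⟨b, hι b⟩,
            (hFhom Y' h').2.2.2⟩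
        · intro a ha
          exact hFagree Y' h' ⟨(a : S), hι a⟩ (hsub ha)
      choose Ys hYs hmem using stepA
      set f : S → T := fun s => F (Ys s) (hYs s) ⟨s, hmem s⟩ with hfdef
      have key : ∀ Y : Set S, ∀ h : (Y ⊆ X ∧ Y.Finite ∧ Y.Nonempty),
          ∀ s : S, ∀ hs : s ∈ sclosure Y, f s = F Y h ⟨s, hs⟩ := by
        intro Y h s hs
        have helig : (Ys s ∪ Y ⊆ X ∧ (Ys s ∪ Y).Finite ∧ (Ys s ∪ Y).Nonempty) :=
          ⟨Set.union_subset (hYs s).1 h.1, (hYs s).2.1.union h.2.1, (hYs s).2.2.inl⟩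
        calc f s = F (Ys s ∪ Y) helig ⟨s, sclosure_mono Set.subset_union_left (hmem s)⟩ :=
              hcompat (Ys s) (Ys s ∪ Y) (hYs s) helig Set.subset_union_left s (hmem s)
          _ = F Y h ⟨s, hs⟩ :=
              (hcompat Y (Ys s ∪ Y) h helig Set.subset_union_right s hs).symm
      have keyop : ∀ a b : S, ∃ Y : Set S, ∃ h : (Y ⊆ X ∧ Y.Finite ∧ Y.Nonempty),
          ∃ ha : a ∈ sclosure Y, ∃ hb : b ∈ sclosure Y, True := by
        intro a b
        have helig : (Ys a ∪ Ys b ⊆ X ∧ (Ys a ∪ Ys b).Finite ∧ (Ys a ∪ Ys b).Nonempty) :=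
          ⟨Set.union_subset (hYs a).1 (hYs b).1, (hYs a).2.1.union (hYs b).2.1, (hYs a).2.2.inl⟩
        exact ⟨Ys a ∪ Ys b, helig, sclosure_mono Set.subset_union_left (hmem a),
          sclosure_mono Set.subset_union_right (hmem b), trivial⟩
      refine ⟨f, ⟨?_, ?_, ?_, ?_⟩, ?_⟩
      · intro a b
        obtain ⟨Y, h, ha, hb, -⟩ := keyop a b
        have hab : a ⋏ b ∈ sclosure Y := (sclosure.closed ha hb).1
        rw [key Y h a ha, key Y h b hb, key Y h (a ⋏ b) hab]
        exact (hFhom Y h).1 ⟨a, ha⟩ ⟨b, hb⟩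
      · intro a b
        obtain ⟨Y, h, ha, hb, -⟩ := keyop a b
        have hab : a ⋎ b ∈ sclosure Y := (sclosure.closed ha hb).2.1
        rw [key Y h a ha, key Y h b hb, key Y h (a ⋎ b) hab]
        exact (hFhom Y h).2.1 ⟨a, ha⟩ ⟨b, hb⟩
      · intro a b
        obtain ⟨Y, h, ha, hb, -⟩ := keyop a b
        have hab : a ∖ b ∈ sclosure Y := (sclosure.closed ha hb).2.2
        rw [key Y h a ha, key Y h b hb, key Y h (a ∖ b) hab]
        exact (hFhom Y h).2.2.1 ⟨a, ha⟩ ⟨b, hb⟩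
      · have helig : ({x₀} ⊆ X ∧ ({x₀} : Set S).Finite ∧ ({x₀} : Set S).Nonempty) :=
          ⟨by simpa using hx₀, Set.finite_singleton x₀, Set.singleton_nonempty x₀⟩
        rw [key {x₀} helig SBA.zero (sclosure.zero_mem _)]
        exact (hFhom {x₀} helig).2.2.2
      · intro x
        have helig : ({(x : S)} ⊆ X ∧ ({(x : S)} : Set S).Finite ∧ ({(x : S)} : Set S).Nonempty) :=
          ⟨by simp [x.2], Set.finite_singleton _, Set.singleton_nonempty _⟩
        rw [key {(x : S)} helig (x : S) (subset_sclosure _ rfl)]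
        exact hFagree {(x : S)} helig ⟨(x : S), subset_sclosure _ rfl⟩ rfl
    · -- X is empty: S is trivial
      have hall : ∀ s : S, s = SBA.zero := by
        have h1 : sclosure X = Set.univ := hgen _ (subset_sclosure X) (sclosure.zero_mem X)
          (fun a b ha hb => sclosure.closed ha hb)
        have h2 : sclosure X ⊆ {SBA.zero} := by
          refine sclosure_min ?_ rfl ?_
          · intro x hx
            exact absurd ⟨x, hx⟩ hX
          · rintro a b (rfl : a = SBA.zero) (rfl : b = SBA.zero)
            refine ⟨SBA.zero_wedge _, SBA.zero_vee _, zero_diff_zero⟩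
        intro s
        exact h2 (h1 ▸ Set.mem_univ s)
      refine ⟨fun _ => SBA.zero, ⟨fun a b => (SBA.zero_wedge _).symm,
        fun a b => (SBA.zero_vee _).symm, fun a b => zero_diff_zero.symm, rfl⟩, ?_⟩
      intro x
      exact absurd ⟨(x : S), x.2⟩ hX
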